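/- Let F be the block graph of a digraph G: the bipartite undirected graph whose vertices are the vertices of G plus one node for each vertex-resilient block, with an edge {u,B} whenever vertex u belongs to block B. If u and v are vertices of G connected by a path P in F, then for any vertex w of G not lying on P, u and v are strongly connected in G \ w. -/

import Mathlib

variable {V : Type*}

/-- Mutual reachability (strong connectivity of a pair) in the digraph `E`. -/
def SConn (E : V → V → Prop) (u v : V) : Prop :=
  Relation.ReflTransGen E u v ∧ Relation.ReflTransGen E v u

/-- The digraph obtained from `E` by deleting vertex `w` (and incident edges). -/
def delV (E : V → V → Prop) (w : V) : V → V → Prop :=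
  fun a b => E a b ∧ a ≠ w ∧ b ≠ w

/-- The digraph obtained from `E` by deleting the single edge `(a,b)`. -/
def delE (E : V → V → Prop) (a b : V) : V → V → Prop :=
  fun x y => E x y ∧ ¬(x = a ∧ y = b)

/-- `u` and `v` are vertex-resilient: they are distinct and remain strongly
connected after deletion of any single other vertex. -/
def VRes (E : V → V → Prop) (u v : V) : Prop :=
  u ≠ v ∧ ∀ w, w ≠ u → w ≠ v → SConn (delV E w) u v

/-- A vertex-resilient block: a maximal set of size ≥ 2 of pairwise
vertex-resilient vertices. -/
def IsVRBlock (E : V → V → Prop) (B : Set V) : Prop :=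
  B.Pairwise (VRes E) ∧ (∃ a ∈ B, ∃ b ∈ B, a ≠ b) ∧
    ∀ B' : Set V, B ⊆ B' → B'.Pairwise (VRes E) → B' = B

/-- `l` is (the vertex list of) a directed path from `u` to `v` in `E`. -/
def IsPathList (E : V → V → Prop) (u v : V) (l : List V) : Prop :=
  l.Chain' E ∧ l.head? = some u ∧ l.getLast? = some v

/-- The internal vertices of a path given as a vertex list. -/
def internalsL (l : List V) : List V := (l.drop 1).dropLast

/-- The edges of a path given as a vertex list. -/
def edgesOfL (l : List V) : List (V × V) := l.zip l.tail

/-- There exist two internally vertex-disjoint (simple, distinct) paths from `u` to `v`. -/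
def TwoVPaths (E : V → V → Prop) (u v : V) : Prop :=
  ∃ l₁ l₂ : List V, IsPathList E u v l₁ ∧ IsPathList E u v l₂ ∧
    l₁.Nodup ∧ l₂.Nodup ∧ l₁ ≠ l₂ ∧ ∀ x ∈ internalsL l₁, x ∉ internalsL l₂

/-- `u` and `v` are 2-vertex-connected. -/
def TwoVConn (E : V → V → Prop) (u v : V) : Prop :=
  u ≠ v ∧ TwoVPaths E u v ∧ TwoVPaths E v u

/-- There exist two edge-disjoint paths from `u` to `v`. -/
def TwoEPaths (E : V → V → Prop) (u v : V) : Prop :=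
  ∃ l₁ l₂ : List V, IsPathList E u v l₁ ∧ IsPathList E u v l₂ ∧
    ∀ e ∈ edgesOfL l₁, e ∉ edgesOfL l₂

/-- `u` and `v` are 2-edge-connected. -/
def TwoEConn (E : V → V → Prop) (u v : V) : Prop :=
  u ≠ v ∧ TwoEPaths E u v ∧ TwoEPaths E v u

/-- A 2-vertex-connected block. -/
def Is2VBlock (E : V → V → Prop) (B : Set V) : Prop :=
  B.Pairwise (TwoVConn E) ∧ (∃ a ∈ B, ∃ b ∈ B, a ≠ b) ∧
    ∀ B' : Set V, B ⊆ B' → B'.Pairwise (TwoVConn E) → B' = B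

/-- A 2-edge-connected block. -/
def Is2EBlock (E : V → V → Prop) (B : Set V) : Prop :=
  B.Pairwise (TwoEConn E) ∧ (∃ a ∈ B, ∃ b ∈ B, a ≠ b) ∧
    ∀ B' : Set V, B ⊆ B' → B'.Pairwise (TwoEConn E) → B' = B

/-- The digraph `E` is strongly connected. -/
def StronglyConn (E : V → V → Prop) : Prop :=
  ∀ u v, Relation.ReflTransGen E u v

/-- `(a,b)` is a strong bridge of the strongly connected digraph `E`. -/
def IsStrongBridge (E : V → V → Prop) (a b : V) : Prop :=
  E a b ∧ ¬ StronglyConn (delE E a b)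

/-- `u` dominates `w` in the flow graph with start vertex `s`:
every path from `s` to `w` contains `u`. -/
def DomOf (E : V → V → Prop) (s u w : V) : Prop :=
  ∀ l : List V, IsPathList E s w l → u ∈ l

/-- `d` is the immediate dominator of `w` in the flow graph with start `s`:
the proper dominator of `w` dominated by all proper dominators of `w`. -/
def IdomOf (E : V → V → Prop) (s d w : V) : Prop :=
  d ≠ w ∧ DomOf E s d w ∧ ∀ u, u ≠ w → DomOf E s u w → DomOf E s u d

/-- The block graph `F` of the digraph `E`: the bipartite undirected graph on the
vertices of `E` together with its vertex-resilient blocks, a vertex `u` being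
adjacent to a block node `B` exactly when `u ∈ B`. -/
def blockGraph (E : V → V → Prop) :
    SimpleGraph (V ⊕ {B : Set V // IsVRBlock E B}) where
  Adj a b := ∃ u B, u ∈ B.1 ∧
    ((a = Sum.inl u ∧ b = Sum.inr B) ∨ (a = Sum.inr B ∧ b = Sum.inl u))
  symm := by
    constructor
    rintro a b ⟨u, B, hm, (⟨rfl, rfl⟩ | ⟨rfl, rfl⟩)⟩
    · exact ⟨u, B, hm, Or.inr ⟨rfl, rfl⟩⟩
    · exact ⟨u, B, hm, Or.inl ⟨rfl, rfl⟩⟩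
  loopless := by
    constructor
    rintro a ⟨u, B, hm, (⟨rfl, h⟩ | ⟨rfl, h⟩)⟩ <;> simp at h

/-! Two consecutive vertices of `G` on `P` lie in a common block, and two vertices of a block
stay strongly connected after deleting any other vertex, in particular `w`; chaining these
connections along `P` connects `u` to `v` in `G \ w`. -/

theorem SConn.refl (E : V → V → Prop) (u : V) : SConn E u u :=
  ⟨.refl, .refl⟩

theorem SConn.trans {E : V → V → Prop} {a b c : V}
    (hab : SConn E a b) (hbc : SConn E b c) : SConn E a c :=
  ⟨hab.1.trans hbc.1, hbc.2.trans hab.2⟩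

theorem sConn_delV_of_mem_block {E : V → V → Prop} {B : Set V} (hB : B.Pairwise (VRes E))
    {a b w : V} (ha : a ∈ B) (hb : b ∈ B) (hwa : w ≠ a) (hwb : w ≠ b) :
    SConn (delV E w) a b := by
  rcases eq_or_ne a b with rfl | hab
  · exact SConn.refl _ a
  · exact (hB ha hb hab).2 w hwa hwb

/-- The invariant propagated backwards along a path of the block graph ending at `v`. -/
def ConnToIn (E : V → V → Prop) (w v : V) : V ⊕ {B : Set V // IsVRBlock E B} → Prop
  | Sum.inl u => SConn (delV E w) u v
  | Sum.inr B => ∀ u ∈ B.1, u ≠ w → SConn (delV E w) u v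

theorem ConnToIn.of_adj {E : V → V → Prop} {w v : V} {x y : V ⊕ {B : Set V // IsVRBlock E B}}
    (hxy : (blockGraph E).Adj x y) (hx : x ≠ Sum.inl w) (hy : y ≠ Sum.inl w)
    (h : ConnToIn E w v y) : ConnToIn E w v x := by
  obtain ⟨a, B, haB, ⟨rfl, rfl⟩ | ⟨rfl, rfl⟩⟩ := hxy
  · exact h a haB (fun h' => hx (h' ▸ rfl))
  · have hwa : w ≠ a := fun h' => hy (h' ▸ rfl)
    exact fun u huB hwu => (sConn_delV_of_mem_block B.2.1 huB haB hwu.symm hwa).trans h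

theorem ConnToIn.of_walk {E : V → V → Prop} {w v : V} {x y : V ⊕ {B : Set V // IsVRBlock E B}}
    (P : (blockGraph E).Walk x y) (hw : Sum.inl w ∉ P.support)
    (h : ConnToIn E w v y) : ConnToIn E w v x := by
  induction P with
  | nil => exact h
  | cons hxy P ih =>
    rw [SimpleGraph.Walk.support_cons, List.mem_cons, not_or] at hw
    exact .of_adj hxy (Ne.symm hw.1) (fun h' => hw.2 (h' ▸ P.start_mem_support)) (ih hw.2 h)

theorem stmt2_general (E : V → V → Prop) (u v : V)
    (P : (blockGraph E).Walk (Sum.inl u) (Sum.inl v))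
    (w : V) (hw : Sum.inl w ∉ P.support) :
    SConn (delV E w) u v :=
  ConnToIn.of_walk P hw (SConn.refl _ v)

/-- if `u` and `v` are connected by a path `P` in the block graph `F`,
then for any vertex `w` of `G` not on `P`, `u` and `v` are strongly connected in `G \ w`. -/
theorem stmt2 (E : V → V → Prop) (u v : V)
    (P : (blockGraph E).Walk (Sum.inl u) (Sum.inl v)) (hP : P.IsPath)
    (w : V) (hw : Sum.inl w ∉ P.support) :
    SConn (delV E w) u v :=
  stmt2_general E u v P w hw
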